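/- Let Q : ℝ → Matrix (Fin 3) (Fin 3) ℝ be differentiable with Q(t)ᵀ Q(t) = 1 and det Q(t) = 1 for all t, let e : ℝ → ℝ³ be differentiable, let ω̄ : ℝ → ℝ³, and let q̇ : ℝ → ℝ³ satisfy (1/2) q̇(t) × u = Q̇(t) Q(t)ᵀ u for all u ∈ ℝ³ and all t. Set ẽ(t) := Q(t)ᵀ e(t) and ω̃̄(t) := Q(t)ᵀ(ω̄(t) − q̇(t)). Then for t₀ < t_N, the averaged rotation speed is frame-invariant: (1/(t_N − t₀)) ∫_{t₀}^{t_N} ‖d/dt ẽ(t) − (1/2) ω̃̄(t) × ẽ(t)‖ dt = (1/(t_N − t₀)) ∫_{t₀}^{t_N} ‖d/dt e(t) − (1/2) ω̄(t) × e(t)‖ dt. -/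

import Mathlib

open Matrix

/-- Entrywise time derivative of a time-dependent matrix. -/
noncomputable def matDeriv (Q : ℝ → Matrix (Fin 3) (Fin 3) ℝ) (t : ℝ) :
    Matrix (Fin 3) (Fin 3) ℝ :=
  Matrix.of fun i j => deriv (fun s => Q s i j) t

/-- The cross product on Euclidean 3-space. -/
noncomputable def cross3 (a b : EuclideanSpace ℝ (Fin 3)) : EuclideanSpace ℝ (Fin 3) :=
  (EuclideanSpace.equiv (Fin 3) ℝ).symm
    (crossProduct ((EuclideanSpace.equiv (Fin 3) ℝ) a) ((EuclideanSpace.equiv (Fin 3) ℝ) b))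

/-! Differentiating `Qᵀ Q = 1` gives `Q̇ᵀ = -Qᵀ Q̇ Qᵀ`, so in the derivative `Q̇ᵀ e + Qᵀ ė` of
`ẽ = Qᵀ e` the first term cancels the `q̇`-part of the transformed vorticity term. Since a
rotation commutes with the cross product, `(Qᵀ a) × (Qᵀ b) = Qᵀ (a × b)`, the relative tangent
velocity of the rotated data is `Qᵀ ε̇`, which has the same norm as `ε̇` at every time. -/

namespace Matrix

theorem cross_mulVec_mulVec {R : Type*} [CommRing R] (A : Matrix (Fin 3) (Fin 3) R)
    (v w : Fin 3 → R) : (A *ᵥ v) ⨯₃ (A *ᵥ w) = (adjugate A)ᵀ *ᵥ (v ⨯₃ w) := by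
  ext i
  fin_cases i <;>
    simp [cross_apply, adjugate_fin_three, mulVec, dotProduct, Fin.sum_univ_three] <;> ring

theorem adjugate_eq_transpose {n R : Type*} [Fintype n] [DecidableEq n] [CommRing R]
    {A : Matrix n n R} (hA : Aᵀ * A = 1) (hdet : A.det = 1) : adjugate A = Aᵀ := by
  calc adjugate A = Aᵀ * A * adjugate A := by rw [hA, one_mul]
    _ = Aᵀ := by rw [mul_assoc, mul_adjugate, hdet, one_smul, mul_one]

theorem norm_toEuclideanLin_apply_of_transpose_mul_self_eq_one {n : Type*} [Fintype n]
    [DecidableEq n] {A : Matrix n n ℝ} (hA : Aᵀ * A = 1) (x : EuclideanSpace ℝ n) :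
    ‖toEuclideanLin A x‖ = ‖x‖ := by
  rw [← sq_eq_sq₀ (norm_nonneg _) (norm_nonneg _), ← real_inner_self_eq_norm_sq,
    ← real_inner_self_eq_norm_sq, ← LinearMap.adjoint_inner_right,
    ← toEuclideanLin_conjTranspose_eq_adjoint, conjTranspose_eq_transpose_of_trivial,
    ← LinearMap.comp_apply, ← toLpLin_mul_same, hA, toLpLin_one, LinearMap.id_apply]

theorem hasDerivAt_mulVec {m n : Type*} [Fintype n] {A : ℝ → Matrix m n ℝ}
    {A' : Matrix m n ℝ} {v : ℝ → n → ℝ} {v' : n → ℝ} {t : ℝ}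
    (hA : ∀ i j, HasDerivAt (fun s => A s i j) (A' i j) t) (hv : HasDerivAt v v' t) :
    HasDerivAt (fun s => A s *ᵥ v s) (A' *ᵥ v t + A t *ᵥ v') t := by
  refine hasDerivAt_pi.2 fun i => ?_
  simp only [mulVec, dotProduct, Pi.add_apply, ← Finset.sum_add_distrib]
  exact HasDerivAt.fun_sum fun j _ => (hA i j).mul (hasDerivAt_pi.1 hv j)

theorem hasDerivAt_mul {l m n : Type*} [Fintype m] {A : ℝ → Matrix l m ℝ}
    {A' : Matrix l m ℝ} {B : ℝ → Matrix m n ℝ} {B' : Matrix m n ℝ} {t : ℝ}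
    (hA : ∀ i j, HasDerivAt (fun s => A s i j) (A' i j) t)
    (hB : ∀ i j, HasDerivAt (fun s => B s i j) (B' i j) t) (i : l) (k : n) :
    HasDerivAt (fun s => (A s * B s) i k) ((A' * B t + A t * B') i k) t := by
  simp only [mul_apply, add_apply, ← Finset.sum_add_distrib]
  exact HasDerivAt.fun_sum fun j _ => (hA i j).mul (hB j k)

theorem hasDerivAt_toEuclideanLin_apply {m n : Type*} [Fintype m] [Fintype n] [DecidableEq n]
    {A : ℝ → Matrix m n ℝ} {A' : Matrix m n ℝ} {v : ℝ → EuclideanSpace ℝ n}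
    {v' : EuclideanSpace ℝ n} {t : ℝ}
    (hA : ∀ i j, HasDerivAt (fun s => A s i j) (A' i j) t) (hv : HasDerivAt v v' t) :
    HasDerivAt (fun s => toEuclideanLin (A s) (v s))
      (toEuclideanLin A' (v t) + toEuclideanLin (A t) v') t := by
  have hv' := (PiLp.hasFDerivAt_ofLp 2 (v t)).comp_hasDerivAt t hv
  exact (PiLp.hasFDerivAt_toLp 2 _).comp_hasDerivAt t (hasDerivAt_mulVec hA hv')

theorem transpose_mul_add_transpose_mul_eq_zero_of_hasDerivAt {n : Type*} [Fintype n]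
    [DecidableEq n] {Q : ℝ → Matrix n n ℝ} {Q' : Matrix n n ℝ} {t : ℝ}
    (hQ' : ∀ i j, HasDerivAt (fun s => Q s i j) (Q' i j) t) (hQ : ∀ s, (Q s)ᵀ * Q s = 1) :
    Q'ᵀ * Q t + (Q t)ᵀ * Q' = 0 := by
  ext i j
  have h := hasDerivAt_mul (A := fun s => (Q s)ᵀ) (A' := Q'ᵀ) (fun i j => hQ' j i) hQ' i j
  simp only [hQ] at h
  exact h.unique (hasDerivAt_const t _)

theorem eq_transpose_mulVec_sub_smul_cross {R : Type*} [CommRing R]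
    {Q Q' : Matrix (Fin 3) (Fin 3) R} (hQ : Qᵀ * Q = 1) (hdet : Q.det = 1)
    (hskew : Q'ᵀ * Q + Qᵀ * Q' = 0) (c : R) {q e e' ω : Fin 3 → R}
    (hq : c • q ⨯₃ e = (Q' * Qᵀ) *ᵥ e) :
    (Q'ᵀ *ᵥ e + Qᵀ *ᵥ e') - c • (Qᵀ *ᵥ (ω - q)) ⨯₃ (Qᵀ *ᵥ e) = Qᵀ *ᵥ (e' - c • ω ⨯₃ e) := by
  have hQ'T : Q'ᵀ = -(Qᵀ * Q' * Qᵀ) := by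
    calc Q'ᵀ = Q'ᵀ * (Q * Qᵀ) := by rw [mul_eq_one_comm.mp hQ, mul_one]
      _ = -(Qᵀ * Q' * Qᵀ) := by rw [← mul_assoc, eq_neg_of_add_eq_zero_left hskew, neg_mul]
  rw [cross_mulVec_mulVec, adjugate_transpose, transpose_transpose, adjugate_eq_transpose hQ hdet,
    map_sub, LinearMap.sub_apply, mulVec_sub, mulVec_sub, smul_sub, ← mulVec_smul, ← mulVec_smul,
    hq, hQ'T, neg_mulVec, mulVec_mulVec, mul_assoc]
  abel

end Matrix

noncomputable def relTangentVelocity (e ω : ℝ → EuclideanSpace ℝ (Fin 3)) (t : ℝ) :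
    EuclideanSpace ℝ (Fin 3) :=
  deriv e t - (1 / 2 : ℝ) • cross3 (ω t) (e t)

theorem ofLp_cross3 (a b : EuclideanSpace ℝ (Fin 3)) :
    WithLp.ofLp (cross3 a b) = WithLp.ofLp a ⨯₃ WithLp.ofLp b :=
  rfl

theorem relTangentVelocity_change_of_observer (Q : ℝ → Matrix (Fin 3) (Fin 3) ℝ)
    (hQdiff : ∀ i j : Fin 3, Differentiable ℝ (fun t => Q t i j))
    (hQ : ∀ t : ℝ, (Q t)ᵀ * Q t = 1) (hdet : ∀ t : ℝ, (Q t).det = 1)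
    {e : ℝ → EuclideanSpace ℝ (Fin 3)} (he : Differentiable ℝ e)
    {ωbar qdot et ωt : ℝ → EuclideanSpace ℝ (Fin 3)}
    (hqdot : ∀ (t : ℝ) (u : EuclideanSpace ℝ (Fin 3)),
      (1 / 2 : ℝ) • cross3 (qdot t) u = toEuclideanLin (matDeriv Q t * (Q t)ᵀ) u)
    (het : ∀ t : ℝ, et t = toEuclideanLin (Q t)ᵀ (e t))
    (hωt : ∀ t : ℝ, ωt t = toEuclideanLin (Q t)ᵀ (ωbar t - qdot t)) (t : ℝ) :
    relTangentVelocity et ωt t = toEuclideanLin (Q t)ᵀ (relTangentVelocity e ωbar t) := by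
  have hQ' : ∀ i j, HasDerivAt (fun s => Q s i j) (matDeriv Q t i j) t :=
    fun i j => (hQdiff i j t).hasDerivAt
  have het' : deriv et t =
      toEuclideanLin (matDeriv Q t)ᵀ (e t) + toEuclideanLin (Q t)ᵀ (deriv e t) := by
    rw [funext het]
    exact (hasDerivAt_toEuclideanLin_apply (fun i j => hQ' j i) (he t).hasDerivAt).deriv
  have hq := congrArg WithLp.ofLp (hqdot t (e t))
  simp only [WithLp.ofLp_smul, ofLp_cross3, ofLp_toLpLin, toLin'_apply] at hq
  apply WithLp.ofLp_injective
  simp only [relTangentVelocity, het', het, hωt, WithLp.ofLp_sub, WithLp.ofLp_add,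
    WithLp.ofLp_smul, ofLp_toLpLin, ofLp_cross3, toLin'_apply]
  exact eq_transpose_mulVec_sub_smul_cross (hQ t) (hdet t)
    (transpose_mul_add_transpose_mul_eq_zero_of_hasDerivAt hQ' hQ) _ hq

theorem stmt10_general
    (Q : ℝ → Matrix (Fin 3) (Fin 3) ℝ)
    (hQdiff : ∀ i j : Fin 3, Differentiable ℝ (fun t => Q t i j))
    (hQ : ∀ t : ℝ, (Q t)ᵀ * Q t = 1)
    (hdet : ∀ t : ℝ, (Q t).det = 1)
    (e : ℝ → EuclideanSpace ℝ (Fin 3))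
    (he : Differentiable ℝ e)
    (ωbar qdot : ℝ → EuclideanSpace ℝ (Fin 3))
    (hqdot : ∀ (t : ℝ) (u : EuclideanSpace ℝ (Fin 3)),
      (1 / 2 : ℝ) • cross3 (qdot t) u
        = Matrix.toEuclideanLin (matDeriv Q t * (Q t)ᵀ) u)
    (et ωt : ℝ → EuclideanSpace ℝ (Fin 3))
    (het : ∀ t : ℝ, et t = Matrix.toEuclideanLin (Q t)ᵀ (e t))
    (hωt : ∀ t : ℝ, ωt t = Matrix.toEuclideanLin (Q t)ᵀ (ωbar t - qdot t))
    (t₀ tN : ℝ) :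
    (1 / (tN - t₀)) *
        ∫ t in t₀..tN, ‖deriv et t - (1 / 2 : ℝ) • cross3 (ωt t) (et t)‖
      = (1 / (tN - t₀)) *
        ∫ t in t₀..tN, ‖deriv e t - (1 / 2 : ℝ) • cross3 (ωbar t) (e t)‖ := by
  have hQT : ∀ t, (Q t)ᵀᵀ * (Q t)ᵀ = 1 := fun t => mul_eq_one_comm.mp (hQ t)
  have hnorm : ∀ t, ‖relTangentVelocity et ωt t‖ = ‖relTangentVelocity e ωbar t‖ := fun t => by
    rw [relTangentVelocity_change_of_observer Q hQdiff hQ hdet he hqdot het hωt,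
      norm_toEuclideanLin_apply_of_transpose_mul_self_eq_one (hQT t)]
  exact congrArg _ (intervalIntegral.integral_congr fun t _ => hnorm t)

/-- The averaged rotation speed (time average of the norm of the
relative tangent velocity ė − (1/2) ω̄ × e) is invariant under observer changes
with rotation Q(t) ∈ SO(3). -/
theorem stmt10
    (Q : ℝ → Matrix (Fin 3) (Fin 3) ℝ)
    (hQdiff : ∀ i j : Fin 3, Differentiable ℝ (fun t => Q t i j))
    (hQ : ∀ t : ℝ, (Q t)ᵀ * Q t = 1)
    (hdet : ∀ t : ℝ, (Q t).det = 1)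
    (e : ℝ → EuclideanSpace ℝ (Fin 3))
    (he : Differentiable ℝ e)
    (ωbar qdot : ℝ → EuclideanSpace ℝ (Fin 3))
    (hqdot : ∀ (t : ℝ) (u : EuclideanSpace ℝ (Fin 3)),
      (1 / 2 : ℝ) • cross3 (qdot t) u
        = Matrix.toEuclideanLin (matDeriv Q t * (Q t)ᵀ) u)
    (et ωt : ℝ → EuclideanSpace ℝ (Fin 3))
    (het : ∀ t : ℝ, et t = Matrix.toEuclideanLin (Q t)ᵀ (e t))
    (hωt : ∀ t : ℝ, ωt t = Matrix.toEuclideanLin (Q t)ᵀ (ωbar t - qdot t))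
    (t₀ tN : ℝ) (ht : t₀ < tN) :
    (1 / (tN - t₀)) *
        ∫ t in t₀..tN, ‖deriv et t - (1 / 2 : ℝ) • cross3 (ωt t) (et t)‖
      = (1 / (tN - t₀)) *
        ∫ t in t₀..tN, ‖deriv e t - (1 / 2 : ℝ) • cross3 (ωbar t) (e t)‖ :=
  stmt10_general Q hQdiff hQ hdet e he ωbar qdot hqdot et ωt het hωt t₀ tN
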